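/- arXiv:0912.3222 — 2 statements merged into one kernel-verified Lean document; each statement's English description precedes it below -/
import Mathlib

section
/- Let T be an n×n real M-matrix. Then for every diagonal matrix Pᵏ arising in the iteration P⁰ = O, (I − Pᵏ + T·Pᵏ)·x^{k+1} = b, Pᵏ = P(xᵏ), the matrix I − Pᵏ + T·Pᵏ is an M-matrix (hence invertible), so the iteration is well defined for all k. -/
open Matrix

/-- Spectral radius of a real matrix: supremum of absolute values of its complex eigenvalues. -/
noncomputable def specRad {n : ℕ} (B : Matrix (Fin n) (Fin n) ℝ) : ℝ :=
  sSup {r : ℝ | ∃ μ ∈ spectrum ℂ (B.map (fun a => (a : ℂ))), r = ‖μ‖}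

/-- `T` is an M-matrix: `T = α•I - B` with `B ≥ O` entrywise and `ρ(B) < α`. -/
def IsMmat {n : ℕ} (T : Matrix (Fin n) (Fin n) ℝ) : Prop :=
  ∃ (α : ℝ) (B : Matrix (Fin n) (Fin n) ℝ),
    (∀ i j, 0 ≤ B i j) ∧ specRad B < α ∧ T = α • (1 : Matrix (Fin n) (Fin n) ℝ) - B

/-- `P(x)`: diagonal matrix with i-th entry `1` if `x i ≥ 0`, else `0`. -/
noncomputable def Pmat {n : ℕ} (x : Fin n → ℝ) : Matrix (Fin n) (Fin n) ℝ :=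
  Matrix.diagonal fun i => if 0 ≤ x i then 1 else 0

/-- Irreducibility of a matrix (strong connectivity of its directed graph). -/
def IsIrred {n : ℕ} (T : Matrix (Fin n) (Fin n) ℝ) : Prop :=
  ∀ S : Finset (Fin n), S.Nonempty → S ≠ Finset.univ → ∃ i ∈ S, ∃ j ∉ S, T i j ≠ 0

/-- Condition T2: `T` is irreducible, `null(Tᵀ) = span(v)`, `null(T) = span(w)` with
`v, w > 0` componentwise, and `T + D` is an M-matrix for every diagonal `D ≥ O`, `D ≠ O`. -/
def CondT2 {n : ℕ} (T : Matrix (Fin n) (Fin n) ℝ) (v w : Fin n → ℝ) : Prop :=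
  IsIrred T ∧ (∀ i, 0 < v i) ∧ (∀ i, 0 < w i) ∧
  LinearMap.ker (Matrix.mulVecLin Tᵀ) = Submodule.span ℝ {v} ∧
  LinearMap.ker (Matrix.mulVecLin T) = Submodule.span ℝ {w} ∧
  (∀ d : Fin n → ℝ, (∀ i, 0 ≤ d i) → d ≠ 0 → IsMmat (T + Matrix.diagonal d))

/-!
If `T = α - B` is an M-matrix, Gelfand's formula gives `m ≥ 1` with `‖B ^ m‖ < α ^ m`, and the
geometric sum `u = ∑_{k<m} α ^ k B ^ (m-1-k) 1` is a positive vector with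
`T u = α ^ m 1 - B ^ m 1 > 0`. Conversely, a Z-matrix `M` mapping some `w > 0` to a positive
vector is an M-matrix: write `M = β - C` with `C ≥ 0`; for an eigenvector `z` of `C`, the
coordinate `i` maximizing `|zⱼ| / wⱼ` bounds the eigenvalue by `(C w)ᵢ / wᵢ < β`.
For a diagonal `P` with entries in `{0, 1}`, `I - P + T P` is a Z-matrix, and it maps the vector
equal to `u` on the support of `P` and to a large constant off it to a positive vector.
-/

attribute [local instance] Matrix.linftyOpNormedRing Matrix.linftyOpNormedAlgebra

def IsZmat {n : ℕ} (T : Matrix (Fin n) (Fin n) ℝ) : Prop :=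
  ∀ i j, i ≠ j → T i j ≤ 0

section SpectralRadius

variable {n : ℕ}

lemma specRad_eq_sSup_image (B : Matrix (Fin n) (Fin n) ℝ) :
    specRad B = sSup (norm '' spectrum ℂ (B.map ((↑) : ℝ → ℂ))) := by
  simp only [specRad, Set.image, eq_comm]

lemma norm_le_specRad {B : Matrix (Fin n) (Fin n) ℝ} {μ : ℂ}
    (hμ : μ ∈ spectrum ℂ (B.map ((↑) : ℝ → ℂ))) : ‖μ‖ ≤ specRad B := by
  rw [specRad_eq_sSup_image]
  exact le_csSup ((Matrix.finite_spectrum _).image _).bddAbove ⟨μ, hμ, rfl⟩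

lemma specRad_nonneg (B : Matrix (Fin n) (Fin n) ℝ) : 0 ≤ specRad B :=
  Real.sSup_nonneg (by rintro r ⟨μ, -, rfl⟩; exact norm_nonneg μ)

lemma specRad_lt {B : Matrix (Fin n) (Fin n) ℝ} {β : ℝ} (hβ : 0 < β)
    (h : ∀ μ ∈ spectrum ℂ (B.map ((↑) : ℝ → ℂ)), ‖μ‖ < β) : specRad B < β := by
  rw [specRad_eq_sSup_image]
  rcases (spectrum ℂ (B.map ((↑) : ℝ → ℂ))).eq_empty_or_nonempty with hσ | hσ
  · simpa [hσ] using hβ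
  · rw [((Matrix.finite_spectrum _).image _).csSup_lt_iff (hσ.image _)]
    rintro _ ⟨μ, hμ, rfl⟩
    exact h μ hμ

lemma spectralRadius_lt_ofReal_of_specRad_lt {B : Matrix (Fin n) (Fin n) ℝ} {α : ℝ}
    (hρ : specRad B < α) : spectralRadius ℂ (B.map ((↑) : ℝ → ℂ)) < ENNReal.ofReal α := by
  have hα : 0 < α := (specRad_nonneg B).trans_lt hρ
  rcases (spectrum ℂ (B.map ((↑) : ℝ → ℂ))).eq_empty_or_nonempty with hσ | hσ
  · simpa [spectralRadius, hσ] using hα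
  · refine spectrum.spectralRadius_lt_of_forall_lt_of_nonempty hσ fun μ hμ => ?_
    rw [← NNReal.coe_lt_coe, coe_nnnorm, Real.coe_toNNReal _ hα.le]
    exact (norm_le_specRad hμ).trans_lt hρ

lemma linfty_opNorm_map_ofReal (A : Matrix (Fin n) (Fin n) ℝ) :
    ‖A.map ((↑) : ℝ → ℂ)‖ = ‖A‖ := by
  simp [linfty_opNorm_def]

lemma exists_pow_mulVec_one_lt {B : Matrix (Fin n) (Fin n) ℝ} {α : ℝ} (hρ : specRad B < α) :
    ∃ m, 1 ≤ m ∧ ∀ i, (B ^ m *ᵥ 1) i < α ^ m := by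
  have hα : 0 < α := (specRad_nonneg B).trans_lt hρ
  obtain ⟨m, hm, hm1⟩ := (((spectrum.pow_norm_pow_one_div_tendsto_nhds_spectralRadius
    (B.map ((↑) : ℝ → ℂ))).eventually_lt_const
    (spectralRadius_lt_ofReal_of_specRad_lt hρ)).and (Filter.eventually_ge_atTop 1)).exists
  have hnorm : ‖B ^ m‖ < α ^ m := by
    have hm0 : (0 : ℝ) < m := by exact_mod_cast hm1
    rw [ENNReal.ofReal_lt_ofReal_iff hα, one_div, Real.rpow_inv_lt_iff_of_pos (norm_nonneg _)
      hα.le hm0, Real.rpow_natCast] at hm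
    have hmap : (B ^ m).map ((↑) : ℝ → ℂ) = B.map (↑) ^ m :=
      map_pow Complex.ofRealHom.mapMatrix B m
    rwa [← linfty_opNorm_map_ofReal, hmap]
  refine ⟨m, hm1, fun i => ?_⟩
  calc (B ^ m *ᵥ 1) i ≤ ‖B ^ m *ᵥ 1‖ := (le_abs_self _).trans (norm_le_pi_norm (B ^ m *ᵥ 1) i)
    _ ≤ ‖B ^ m‖ * ‖(1 : Fin n → ℝ)‖ := linfty_opNorm_mulVec _ _
    _ ≤ ‖B ^ m‖ :=
      mul_le_of_le_one_right (norm_nonneg _) ((pi_norm_const_le (1 : ℝ)).trans norm_one.le)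
    _ < α ^ m := hnorm

lemma exists_mulVec_eq_smul_of_mem_spectrum {A : Matrix (Fin n) (Fin n) ℂ} {μ : ℂ}
    (hμ : μ ∈ spectrum ℂ A) : ∃ z ≠ 0, A *ᵥ z = μ • z := by
  rw [← Matrix.spectrum_toLin', ← Module.End.hasEigenvalue_iff_mem_spectrum] at hμ
  obtain ⟨z, hz⟩ := hμ.exists_hasEigenvector
  exact ⟨z, hz.2, by simpa using hz.apply_eq_smul⟩

end SpectralRadius

section NonnegativeMatrices

variable {n : ℕ}

lemma mulVec_nonneg {B : Matrix (Fin n) (Fin n) ℝ} (hB : ∀ i j, 0 ≤ B i j)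
    {v : Fin n → ℝ} (hv : 0 ≤ v) : 0 ≤ B *ᵥ v :=
  fun i => dotProduct_nonneg_of_nonneg (hB i) hv

lemma pow_mulVec_nonneg {B : Matrix (Fin n) (Fin n) ℝ} (hB : ∀ i j, 0 ≤ B i j)
    {v : Fin n → ℝ} (hv : 0 ≤ v) (k : ℕ) : 0 ≤ B ^ k *ᵥ v := by
  induction k with
  | zero => simpa using hv
  | succ k ih =>
    rw [pow_succ', ← mulVec_mulVec]
    exact mulVec_nonneg hB ih

open Finset in
lemma norm_lt_of_mulVec_lt {C : Matrix (Fin n) (Fin n) ℝ} (hC : ∀ i j, 0 ≤ C i j)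
    {w : Fin n → ℝ} (hw : ∀ i, 0 < w i) {β : ℝ} (hCw : ∀ i, (C *ᵥ w) i < β * w i)
    {μ : ℂ} (hμ : μ ∈ spectrum ℂ (C.map ((↑) : ℝ → ℂ))) : ‖μ‖ < β := by
  obtain ⟨z, hz0, hz⟩ := exists_mulVec_eq_smul_of_mem_spectrum hμ
  obtain ⟨j₀, hj₀⟩ := Function.ne_iff.1 hz0
  obtain ⟨i, -, hi⟩ := exists_max_image univ (fun j => ‖z j‖ / w j) ⟨j₀, mem_univ j₀⟩
  set t := ‖z i‖ / w i
  have hzt (j : Fin n) : ‖z j‖ ≤ t * w j := (div_le_iff₀ (hw j)).1 (hi j (mem_univ j))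
  have ht : 0 < t :=
    (div_pos (norm_pos_iff.2 (by simpa using hj₀)) (hw j₀)).trans_le (hi j₀ (mem_univ j₀))
  have hzi : ‖z i‖ = t * w i := by simp only [t, div_mul_cancel₀ _ (hw i).ne']
  have key : ‖μ‖ * ‖z i‖ < β * ‖z i‖ := calc
    ‖μ‖ * ‖z i‖ = ‖(C.map ((↑) : ℝ → ℂ) *ᵥ z) i‖ := by rw [hz]; simp
    _ ≤ ∑ j, C i j * ‖z j‖ := by
      refine (norm_sum_le univ fun j => (C i j : ℂ) * z j).trans_eq (sum_congr rfl fun j _ => ?_)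
      rw [norm_mul, Complex.norm_real, Real.norm_of_nonneg (hC i j)]
    _ ≤ ∑ j, C i j * (t * w j) := sum_le_sum fun j _ => mul_le_mul_of_nonneg_left (hzt j) (hC i j)
    _ = t * (C *ᵥ w) i := by
      simp only [mulVec, dotProduct, mul_sum]
      exact sum_congr rfl fun j _ => by ring
    _ < t * (β * w i) := mul_lt_mul_of_pos_left (hCw i) ht
    _ = β * ‖z i‖ := by rw [hzi]; ring
  exact lt_of_mul_lt_mul_right key (norm_nonneg _)

lemma specRad_lt_of_mulVec_lt {C : Matrix (Fin n) (Fin n) ℝ} (hC : ∀ i j, 0 ≤ C i j)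
    {w : Fin n → ℝ} (hw : ∀ i, 0 < w i) {β : ℝ} (hβ : 0 < β)
    (hCw : ∀ i, (C *ᵥ w) i < β * w i) : specRad C < β :=
  specRad_lt hβ fun _ hμ => norm_lt_of_mulVec_lt hC hw hCw hμ

end NonnegativeMatrices

section MMatrices

variable {n : ℕ}

lemma IsMmat.isZmat {T : Matrix (Fin n) (Fin n) ℝ} (hT : IsMmat T) : IsZmat T := by
  obtain ⟨α, B, hB, -, rfl⟩ := hT
  intro i j hij
  simpa [one_apply_ne hij] using hB i j

lemma IsMmat.isUnit {T : Matrix (Fin n) (Fin n) ℝ} (hT : IsMmat T) : IsUnit T := by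
  obtain ⟨α, B, -, hρ, rfl⟩ := hT
  by_contra hT
  have hα : (α : ℂ) ∈ spectrum ℂ (B.map ((↑) : ℝ → ℂ)) := by
    have hmap : algebraMap ℂ _ (α : ℂ) - B.map ((↑) : ℝ → ℂ)
        = Complex.ofRealHom.mapMatrix (α • 1 - B) := by
      ext i j
      by_cases hij : i = j <;> simp [hij, Matrix.algebraMap_eq_diagonal, one_apply_ne]
    rw [spectrum.mem_iff, hmap, isUnit_iff_isUnit_det, ← RingHom.map_det]
    rwa [isUnit_map_iff, ← isUnit_iff_isUnit_det]
  have := norm_le_specRad hα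
  rw [Complex.norm_real, Real.norm_eq_abs] at this
  linarith [le_abs_self α]

lemma IsMmat.exists_pos_mulVec_pos {T : Matrix (Fin n) (Fin n) ℝ} (hT : IsMmat T) :
    ∃ u : Fin n → ℝ, (∀ i, 0 < u i) ∧ ∀ i, 0 < (T *ᵥ u) i := by
  obtain ⟨α, B, hB, hρ, rfl⟩ := hT
  have hα : 0 < α := (specRad_nonneg B).trans_lt hρ
  obtain ⟨m, hm, hBm⟩ := exists_pow_mulVec_one_lt hρ
  set G := ∑ k ∈ Finset.range m, α ^ k • B ^ (m - 1 - k)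
  have hTG : (α • 1 - B) * G = α ^ m • 1 - B ^ m := by
    simpa [smul_pow] using ((Commute.one_left B).smul_left α).mul_geom_sum₂ m
  refine ⟨G *ᵥ 1, fun i => ?_, fun i => ?_⟩
  · have hG : (G *ᵥ 1) i = ∑ k ∈ Finset.range m, α ^ k * (B ^ (m - 1 - k) *ᵥ 1) i := by
      simp [G, sum_mulVec, smul_mulVec]
    have hterm (k : ℕ) : 0 ≤ α ^ k * (B ^ (m - 1 - k) *ᵥ 1) i :=
      mul_nonneg (pow_nonneg hα.le k) (pow_mulVec_nonneg hB zero_le_one _ i)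
    calc 0 < α ^ (m - 1) * (B ^ (m - 1 - (m - 1)) *ᵥ 1) i := by simpa using pow_pos hα (m - 1)
      _ ≤ (G *ᵥ 1) i :=
        hG ▸ Finset.single_le_sum (fun k _ => hterm k) (Finset.mem_range.2 (by omega))
  · simpa [mulVec_mulVec, hTG, sub_mulVec, smul_mulVec] using hBm i

lemma isMmat_of_mulVec_pos {M : Matrix (Fin n) (Fin n) ℝ} (hM : IsZmat M)
    {w : Fin n → ℝ} (hw : ∀ i, 0 < w i) (hMw : ∀ i, 0 < (M *ᵥ w) i) : IsMmat M := by
  set β := 1 + ∑ i, |M i i|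
  have hβ (i : Fin n) : M i i < β :=
    (le_abs_self _).trans_lt (by
      linarith [Finset.single_le_sum (fun j _ => abs_nonneg (M j j)) (Finset.mem_univ i)])
  have hC (i j : Fin n) : 0 ≤ (β • 1 - M) i j := by
    by_cases hij : i = j
    · subst hij; simpa using (hβ i).le
    · simpa [one_apply_ne hij] using hM i j hij
  refine ⟨β, β • 1 - M, hC, specRad_lt_of_mulVec_lt hC hw ?_ fun i => ?_, (sub_sub_cancel _ _).symm⟩
  · positivity
  · simpa [sub_mulVec, smul_mulVec] using hMw i

lemma IsZmat.mulVec_apply_le {T : Matrix (Fin n) (Fin n) ℝ} (hT : IsZmat T)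
    {x y : Fin n → ℝ} (hxy : x ≤ y) {i : Fin n} (hi : x i = y i) :
    (T *ᵥ y) i ≤ (T *ᵥ x) i := by
  have hdiff : (T *ᵥ y) i - (T *ᵥ x) i = ∑ j, T i j * (y j - x j) := by
    simp only [mulVec, dotProduct, mul_sub, Finset.sum_sub_distrib]
  rw [← sub_nonpos, hdiff]
  refine Finset.sum_nonpos fun j _ => ?_
  rcases eq_or_ne i j with rfl | hij
  · simp [hi]
  · exact mul_nonpos_of_nonpos_of_nonneg (hT i j hij) (sub_nonneg.2 (hxy j))

lemma IsMmat.one_sub_diagonal_add_mul_diagonal {T : Matrix (Fin n) (Fin n) ℝ} (hT : IsMmat T)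
    {p : Fin n → ℝ} (hp : ∀ i, p i = 0 ∨ p i = 1) :
    IsMmat (1 - diagonal p + T * diagonal p) := by
  obtain ⟨u, hu, hTu⟩ := hT.exists_pos_mulVec_pos
  set v := T *ᵥ (p * u)
  set L := 1 + ∑ i, |v i|
  set w : Fin n → ℝ := fun j => p j * u j + (1 - p j) * L
  have hL : 0 < L := by positivity
  have hw (j : Fin n) : 0 < w j := by rcases hp j with h | h <;> simp [w, h, hL, hu j]
  have hpw : diagonal p *ᵥ w = p * u := funext fun j => by
    rcases hp j with h | h <;> simp [w, mulVec_diagonal, h]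
  have hZ : IsZmat (1 - diagonal p + T * diagonal p) := fun i j hij => by
    have hpj : 0 ≤ p j := by rcases hp j with h | h <;> simp [h]
    simpa [one_apply_ne hij, diagonal_apply_ne _ hij] using
      mul_nonpos_of_nonpos_of_nonneg (hT.isZmat i j hij) hpj
  refine isMmat_of_mulVec_pos hZ hw fun i => ?_
  have hMw : ((1 - diagonal p + T * diagonal p) *ᵥ w) i = w i - p i * u i + v i := by
    rw [add_mulVec, sub_mulVec, ← mulVec_mulVec, hpw]
    simp [v]
  rw [hMw]
  rcases hp i with h | h
  · have hvi : |v i| ≤ ∑ j, |v j| :=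
      Finset.single_le_sum (fun j _ => abs_nonneg (v j)) (Finset.mem_univ i)
    simp only [w, h, L]
    linarith [neg_abs_le (v i)]
  · have hpu : p * u ≤ u := fun j => by rcases hp j with h | h <;> simp [h, (hu j).le]
    have hvu : (T *ᵥ u) i ≤ v i := hT.isZmat.mulVec_apply_le hpu (by simp [h])
    simp only [w, h]
    linarith [hTu i]

end MMatrices

noncomputable def iterP {n : ℕ} (T : Matrix (Fin n) (Fin n) ℝ) (b : Fin n → ℝ) :
    ℕ → Matrix (Fin n) (Fin n) ℝ
  | 0 => 0
  | k + 1 => Pmat ((1 - iterP T b k + T * iterP T b k)⁻¹ *ᵥ b)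

lemma IsMmat.one_sub_iterP_add_mul {n : ℕ} {T : Matrix (Fin n) (Fin n) ℝ} (hT : IsMmat T)
    (b : Fin n → ℝ) (k : ℕ) : IsMmat (1 - iterP T b k + T * iterP T b k) := by
  cases k with
  | zero => simpa [iterP] using hT.one_sub_diagonal_add_mul_diagonal (p := 0) fun _ => Or.inl rfl
  | succ k =>
    refine hT.one_sub_diagonal_add_mul_diagonal fun i => ?_
    split_ifs <;> simp

/-- If `T` is an M-matrix, the iteration `P⁰ = O`,
`(I − Pᵏ + T·Pᵏ)·x^{k+1} = b`, `Pᵏ = P(xᵏ)` is well defined for all `k`: there are iterates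
satisfying the recursion, and every matrix `I − Pᵏ + T·Pᵏ` is an M-matrix (hence invertible). -/
theorem stmt6 {n : ℕ} (T : Matrix (Fin n) (Fin n) ℝ) (hT : IsMmat T) (b : Fin n → ℝ) :
    ∃ (x : ℕ → Fin n → ℝ) (P : ℕ → Matrix (Fin n) (Fin n) ℝ),
      P 0 = 0 ∧ (∀ k, 1 ≤ k → P k = Pmat (x k)) ∧
      ∀ k, IsMmat (1 - P k + T * P k) ∧ IsUnit (1 - P k + T * P k) ∧
        (1 - P k + T * P k) *ᵥ x (k + 1) = b := by
  set P := iterP T b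
  have hM (k : ℕ) : IsMmat (1 - P k + T * P k) := hT.one_sub_iterP_add_mul b k
  let x : ℕ → Fin n → ℝ
    | 0 => 0
    | k + 1 => (1 - P k + T * P k)⁻¹ *ᵥ b
  refine ⟨x, P, rfl, ?_, fun k => ⟨hM k, (hM k).isUnit, ?_⟩⟩
  · rintro (_ | k) hk
    · omega
    · rfl
  · rw [mulVec_mulVec, mul_nonsing_inv _ ((isUnit_iff_isUnit_det _).1 (hM k).isUnit), one_mulVec]
end

section
/- Let T be an irreducible n×n real matrix satisfying condition T2 (null(Tᵀ) = span(v), null(T) = span(w) with v, w > 0 componentwise, and T + D is an M-matrix for every diagonal D ≥ O, D ≠ O), and let b ∈ ℝⁿ with vᵀb < 0. Then the piecewise linear system [I − P(x) + T·P(x)]·x = b has a unique solution x ∈ ℝⁿ. -/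
open Matrix

/-!
Writing `x = x⁺ - x⁻`, the system reads `T x⁺ - x⁻ = b`, and condition T2 makes `T` a singular
Z-matrix with `vᵀ T = 0` and `T w = 0`.

Existence: shifting `b` up along `w` lands in `range T = v^⊥`, so the complementarity problem
`u ≥ 0, T u ≥ b` is feasible. A minimiser of `∑ uᵢ` over a compact part of the feasible set is
complementary, since off-diagonal signs let one lower a coordinate that has slack, and then
`x = u - (T u - b)` solves the system.

Uniqueness: for two solutions `x, y`, the vector `u = x⁺ - y⁺` has `uᵢ (T u)ᵢ ≤ 0`. With
`z = u / w`, the form `∑ᵢⱼ vᵢ Tᵢⱼ wⱼ (zᵢ - zⱼ)²` equals `-2 ∑ᵢ (vᵢ / wᵢ) uᵢ (T u)ᵢ ≥ 0` while all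
its terms are `≤ 0`, so `z` is constant along the edges of `T`, hence constant by irreducibility:
`u = c w`. Then `x⁻ = y⁻`, and `vᵀ b < 0` forces a coordinate where `x` and `y` are both negative,
where `u` vanishes; so `c = 0`.
-/

section

variable {α : Type*} [Ring α] [LinearOrder α] [IsOrderedRing α]

lemma posPart_sub_posPart_mul_negPart_sub_negPart_nonpos (a c : α) :
    (a⁺ - c⁺) * (a⁻ - c⁻) ≤ 0 := by
  rcases le_total 0 a with ha | ha <;> rcases le_total 0 c with hc | hc <;>
    simp [posPart_of_nonneg, posPart_of_nonpos, negPart_of_nonneg, negPart_of_nonpos, ha, hc]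
  exacts [mul_nonpos_of_nonneg_of_nonpos ha hc, mul_nonpos_of_nonneg_of_nonpos hc ha]

lemma posPart_sub_of_eq_zero_or_eq_zero {a c : α} (ha : 0 ≤ a) (hc : 0 ≤ c)
    (h : a = 0 ∨ c = 0) : (a - c)⁺ = a := by
  rcases h with rfl | rfl
  · simpa using hc
  · simpa using ha

end

section

variable {ι : Type*} [Fintype ι]

lemma sum_sum_mul_sub_sq_of_sum_eq_zero (L : Matrix ι ι ℝ) (z : ι → ℝ)
    (hrow : ∀ i, ∑ j, L i j = 0) (hcol : ∀ j, ∑ i, L i j = 0) :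
    ∑ i, ∑ j, L i j * (z i - z j) ^ 2 = -2 * ∑ i, ∑ j, L i j * z i * z j := by
  have hsq_left : ∑ i, ∑ j, L i j * z i ^ 2 = 0 := by
    simp_rw [← Finset.sum_mul, hrow, zero_mul, Finset.sum_const_zero]
  have hsq_right : ∑ i, ∑ j, L i j * z j ^ 2 = 0 := by
    rw [Finset.sum_comm]
    simp_rw [← Finset.sum_mul, hcol, zero_mul, Finset.sum_const_zero]
  have hexpand : ∀ i j, L i j * (z i - z j) ^ 2
      = L i j * z i ^ 2 - 2 * (L i j * z i * z j) + L i j * z j ^ 2 := fun i j => by ring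
  simp_rw [hexpand, Finset.sum_add_distrib, Finset.sum_sub_distrib, hsq_left, hsq_right,
    ← Finset.mul_sum]
  ring

def lcpFeasibleSet (T : Matrix ι ι ℝ) (b : ι → ℝ) : Set (ι → ℝ) :=
  {u | 0 ≤ u ∧ b ≤ T *ᵥ u}

variable {T : Matrix ι ι ℝ} {v w b : ι → ℝ}

lemma isClosed_lcpFeasibleSet : IsClosed (lcpFeasibleSet T b) :=
  (isClosed_le continuous_const continuous_id).inter
    (isClosed_le continuous_const (mulVecLin T).continuous_of_finiteDimensional)

lemma exists_lt_of_pos_of_lt_mulVec [DecidableEq ι] (hT : ∀ i j, i ≠ j → T i j ≤ 0)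
    {m : ι → ℝ} (hm : m ∈ lcpFeasibleSet T b) {i : ι} (hmi : 0 < m i)
    (hslack : b i < (T *ᵥ m) i) :
    ∃ m' ∈ lcpFeasibleSet T b, m' ≤ m ∧ ∑ j, m' j < ∑ j, m j := by
  obtain ⟨ε, ⟨hεm, hεT⟩, hε⟩ : ∃ ε : ℝ, (ε < m i ∧ ε * T i i < (T *ᵥ m) i - b i) ∧ 0 < ε := by
    have hsmall : ∀ᶠ ε in nhds (0 : ℝ), ε < m i ∧ ε * T i i < (T *ᵥ m) i - b i :=
      (eventually_lt_nhds hmi).and <|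
        (continuous_id.mul continuous_const).continuousAt.eventually_lt continuousAt_const
          (by simpa using hslack)
    exact ((hsmall.filter_mono nhdsWithin_le_nhds).and
      (self_mem_nhdsWithin (s := Set.Ioi 0))).exists
  set m' := m - ε • Pi.single i 1 with hm'
  have hTm' : T *ᵥ m' = T *ᵥ m - ε • Tᵀ i := by
    rw [hm', mulVec_sub, mulVec_smul, mulVec_single_one]; rfl
  have hstep : 0 ≤ ε • (Pi.single i 1 : ι → ℝ) :=
    smul_nonneg hε.le (Pi.single_nonneg.mpr zero_le_one)
  refine ⟨m', ⟨fun j => ?_, fun j => ?_⟩, sub_le_self m hstep, ?_⟩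
  · rcases eq_or_ne j i with rfl | hji
    · simpa [hm'] using hεm.le
    · simpa [hm', hji] using hm.1 j
  · rw [hTm']
    rcases eq_or_ne j i with rfl | hji
    · simp only [Pi.sub_apply, Pi.smul_apply, transpose_apply, smul_eq_mul]
      linarith
    · have := mul_nonpos_of_nonneg_of_nonpos hε.le (hT j i hji)
      simp only [Pi.sub_apply, Pi.smul_apply, transpose_apply, smul_eq_mul]
      linarith [hm.2 j]
  · simp [hm', Finset.sum_sub_distrib, Pi.single_apply, hε]

theorem exists_complementary_mem_lcpFeasibleSet [DecidableEq ι]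
    (hT : ∀ i j, i ≠ j → T i j ≤ 0) {u₀ : ι → ℝ} (hu₀ : u₀ ∈ lcpFeasibleSet T b) :
    ∃ m ∈ lcpFeasibleSet T b, ∀ i, m i = 0 ∨ (T *ᵥ m) i = b i := by
  have hK : IsCompact (lcpFeasibleSet T b ∩ Set.Iic u₀) :=
    isCompact_Icc.of_isClosed_subset (isClosed_lcpFeasibleSet.inter isClosed_Iic)
      fun u hu => ⟨hu.1.1, hu.2⟩
  obtain ⟨m, hmK, hmin⟩ := hK.exists_isMinOn ⟨u₀, hu₀, Set.self_mem_Iic⟩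
    (continuous_finsetSum _ fun i _ => continuous_apply i).continuousOn
  refine ⟨m, hmK.1, fun i => ?_⟩
  by_contra! h
  obtain ⟨m', hm', hle, hlt⟩ := exists_lt_of_pos_of_lt_mulVec hT hmK.1
    ((hmK.1.1 i).lt_of_ne' h.1) ((hmK.1.2 i).lt_of_ne' h.2)
  exact (hmin ⟨hm', hle.trans hmK.2⟩).not_gt hlt

lemma range_mulVecLin_eq_ker_dotProduct [DecidableEq ι] (hv : v ≠ 0) (hw : w ≠ 0)
    (hvT : v ᵥ* T = 0) (hker : LinearMap.ker T.mulVecLin = Submodule.span ℝ {w}) :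
    LinearMap.range T.mulVecLin = LinearMap.ker (dotProductEquiv ℝ ι v) := by
  apply Submodule.eq_of_le_of_finrank_eq
  · rintro _ ⟨u, rfl⟩
    simp [dotProduct_mulVec, hvT]
  · have hrank := LinearMap.finrank_range_add_finrank_ker T.mulVecLin
    have hcorank := Module.Dual.finrank_ker_add_one_of_ne_zero
      ((LinearEquiv.map_ne_zero_iff _).mpr hv : dotProductEquiv ℝ ι v ≠ 0)
    rw [hker, finrank_span_singleton hw] at hrank
    omega

lemma exists_nonneg_add_smul (hw : ∀ i, 0 < w i) (u : ι → ℝ) :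
    ∃ t : ℝ, 0 ≤ u + t • w := by
  refine ⟨∑ i, |u i| / w i, fun i => ?_⟩
  have hle : |u i| / w i ≤ ∑ j, |u j| / w j :=
    Finset.single_le_sum (fun j _ => div_nonneg (abs_nonneg _) (hw j).le) (Finset.mem_univ i)
  rw [div_le_iff₀ (hw i)] at hle
  simp only [Pi.zero_apply, Pi.add_apply, Pi.smul_apply, smul_eq_mul]
  linarith [neg_abs_le (u i)]

lemma exists_mem_lcpFeasibleSet [DecidableEq ι] (hv : ∀ i, 0 < v i) (hw : ∀ i, 0 < w i)
    (hvT : v ᵥ* T = 0) (hker : LinearMap.ker T.mulVecLin = Submodule.span ℝ {w})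
    (hvb : v ⬝ᵥ b < 0) : ∃ u, u ∈ lcpFeasibleSet T b := by
  have hvw : 0 < v ⬝ᵥ w :=
    Finset.sum_pos (fun i _ => mul_pos (hv i) (hw i)) (Finset.nonempty_of_sum_ne_zero hvb.ne)
  have hTw : T *ᵥ w = 0 := by
    simpa using (hker ▸ Submodule.mem_span_singleton_self w : w ∈ LinearMap.ker T.mulVecLin)
  set y := b - (v ⬝ᵥ b / v ⬝ᵥ w) • w
  have hy : y ∈ LinearMap.range T.mulVecLin := by
    rw [range_mulVecLin_eq_ker_dotProduct (fun h => hvb.ne (by simp [h]))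
      (fun h => hvw.ne' (by simp [h])) hvT hker]
    simp [y, dotProduct_sub, dotProduct_smul, div_mul_cancel₀ _ hvw.ne']
  obtain ⟨u, hu⟩ := hy
  obtain ⟨t, ht⟩ := exists_nonneg_add_smul hw u
  refine ⟨u + t • w, ht, fun i => ?_⟩
  have hcoef : 0 ≤ -(v ⬝ᵥ b / v ⬝ᵥ w) :=
    neg_nonneg.mpr (div_nonpos_of_nonpos_of_nonneg hvb.le hvw.le)
  have : T *ᵥ (u + t • w) = y := by simpa [mulVec_add, mulVec_smul, hTw] using hu
  rw [this]
  simpa [y] using mul_nonneg hcoef (hw i).le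

lemma exists_mulVec_posPart_sub_negPart_eq [DecidableEq ι] (hT : ∀ i j, i ≠ j → T i j ≤ 0)
    (hv : ∀ i, 0 < v i) (hw : ∀ i, 0 < w i) (hvT : v ᵥ* T = 0)
    (hker : LinearMap.ker T.mulVecLin = Submodule.span ℝ {w}) (hvb : v ⬝ᵥ b < 0) :
    ∃ x : ι → ℝ, T *ᵥ x⁺ - x⁻ = b := by
  obtain ⟨u, hu⟩ := exists_mem_lcpFeasibleSet hv hw hvT hker hvb
  obtain ⟨m, hm, hcompl⟩ := exists_complementary_mem_lcpFeasibleSet hT hu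
  refine ⟨m - (T *ᵥ m - b), ?_⟩
  have hpos : (m - (T *ᵥ m - b))⁺ = m := funext fun i =>
    posPart_sub_of_eq_zero_or_eq_zero (hm.1 i) (sub_nonneg.mpr (hm.2 i))
      ((hcompl i).imp_right sub_eq_zero.mpr)
  have hdecomp := posPart_sub_negPart (m - (T *ᵥ m - b))
  rw [hpos] at hdecomp ⊢
  linear_combination hdecomp

lemma exists_neg_of_dotProduct_neg (hvT : v ᵥ* T = 0) {x : ι → ℝ} (hx : T *ᵥ x⁺ - x⁻ = b)
    (hvb : v ⬝ᵥ b < 0) : ∃ k, x k < 0 := by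
  by_contra! h
  have hneg : x⁻ = 0 := funext fun k => negPart_eq_zero.mpr (h k)
  rw [← hx, hneg, sub_zero, dotProduct_mulVec, hvT, zero_dotProduct] at hvb
  exact hvb.false

lemma div_eq_div_of_mul_mulVec_nonpos (hT : ∀ i j, i ≠ j → T i j ≤ 0) (hv : ∀ i, 0 < v i)
    (hw : ∀ i, 0 < w i) (hvT : v ᵥ* T = 0) (hTw : T *ᵥ w = 0) {u : ι → ℝ}
    (hu : ∀ i, u i * (T *ᵥ u) i ≤ 0) {i j : ι} (hij : T i j ≠ 0) : u i / w i = u j / w j := by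
  set z : ι → ℝ := fun i => u i / w i
  set L : Matrix ι ι ℝ := fun i j => v i * T i j * w j
  have hL : ∀ i j, i ≠ j → L i j ≤ 0 := fun i j hij =>
    mul_nonpos_of_nonpos_of_nonneg (mul_nonpos_of_nonneg_of_nonpos (hv i).le (hT i j hij))
      (hw j).le
  have hterm : ∀ i j, L i j * (z i - z j) ^ 2 ≤ 0 := fun i j => by
    rcases eq_or_ne i j with rfl | hij
    · simp
    · exact mul_nonpos_of_nonpos_of_nonneg (hL i j hij) (sq_nonneg _)
  have hrow : ∀ i, ∑ j, L i j = 0 := fun i => by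
    simpa [L, mulVec, dotProduct, Finset.mul_sum, mul_assoc] using
      congrArg (v i * ·) (congrFun hTw i)
  have hcol : ∀ j, ∑ i, L i j = 0 := fun j => by
    simpa [L, vecMul, dotProduct, Finset.sum_mul] using congrArg (· * w j) (congrFun hvT j)
  have hcross : ∑ i, ∑ j, L i j * z i * z j = ∑ i, v i / w i * (u i * (T *ᵥ u) i) := by
    refine Finset.sum_congr rfl fun i _ => ?_
    simp only [L, z, mulVec, dotProduct, Finset.mul_sum]
    refine Finset.sum_congr rfl fun j _ => ?_
    field_simp [(hw i).ne', (hw j).ne']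
  have hsum : ∑ i, ∑ j, L i j * (z i - z j) ^ 2 = 0 := by
    refine le_antisymm (Finset.sum_nonpos fun i _ => Finset.sum_nonpos fun j _ => hterm i j) ?_
    rw [sum_sum_mul_sub_sq_of_sum_eq_zero L z hrow hcol, hcross]
    exact mul_nonneg_of_nonpos_of_nonpos (by norm_num) (Finset.sum_nonpos fun i _ =>
      mul_nonpos_of_nonneg_of_nonpos (div_nonneg (hv i).le (hw i).le) (hu i))
  have hij0 : L i j * (z i - z j) ^ 2 = 0 :=
    (Finset.sum_eq_zero_iff_of_nonpos fun j _ => hterm i j).mp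
      ((Finset.sum_eq_zero_iff_of_nonpos fun i _ =>
        Finset.sum_nonpos fun j _ => hterm i j).mp hsum i (Finset.mem_univ i)) j
      (Finset.mem_univ j)
  rcases eq_or_ne i j with rfl | hne
  · rfl
  have hLneg : L i j < 0 :=
    mul_neg_of_neg_of_pos (mul_neg_of_pos_of_neg (hv i) ((hT i j hne).lt_of_ne hij)) (hw j)
  exact sub_eq_zero.mp (pow_eq_zero_iff two_ne_zero |>.mp
    ((mul_eq_zero.mp hij0).resolve_left hLneg.ne))

end

section

variable {n : ℕ}

lemma Pmat_mulVec_self (x : Fin n → ℝ) : Pmat x *ᵥ x = x⁺ := by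
  ext i
  rw [Pmat, mulVec_diagonal]
  split_ifs with h
  · simp [posPart_of_nonneg h]
  · simp [posPart_of_nonpos (not_le.mp h).le]

lemma one_sub_Pmat_add_mul_Pmat_mulVec_self (T : Matrix (Fin n) (Fin n) ℝ) (x : Fin n → ℝ) :
    (1 - Pmat x + T * Pmat x) *ᵥ x = T *ᵥ x⁺ - x⁻ := by
  rw [add_mulVec, sub_mulVec, one_mulVec, ← mulVec_mulVec, Pmat_mulVec_self]
  linear_combination (-1 : Fin n → ℝ) * posPart_sub_negPart x

lemma IsMmat.apply_nonpos {A : Matrix (Fin n) (Fin n) ℝ} (hA : IsMmat A) {i j : Fin n}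
    (hij : i ≠ j) : A i j ≤ 0 := by
  obtain ⟨α, B, hB, -, rfl⟩ := hA
  simpa [one_apply_ne hij] using hB i j

lemma IsIrred.eq_of_forall_ne_zero {α : Type*} {T : Matrix (Fin n) (Fin n) ℝ} (hT : IsIrred T)
    {z : Fin n → α} (hz : ∀ i j, T i j ≠ 0 → z i = z j) (i j : Fin n) : z i = z j := by
  classical
  by_contra hij
  obtain ⟨k, hk, l, hl, hkl⟩ := hT {k | z k = z i} ⟨i, by simp⟩
    fun h => hij (by simpa [eq_comm] using (Finset.ext_iff.mp h j).mpr (Finset.mem_univ j))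
  simp only [Finset.mem_filter, Finset.mem_univ, true_and] at hk hl
  exact hl (hz k l hkl ▸ hk)

lemma IsIrred.exists_eq_smul_of_mul_mulVec_nonpos {T : Matrix (Fin n) (Fin n) ℝ} {v w : Fin n → ℝ}
    (hirr : IsIrred T) (hT : ∀ i j, i ≠ j → T i j ≤ 0) (hv : ∀ i, 0 < v i)
    (hw : ∀ i, 0 < w i) (hvT : v ᵥ* T = 0) (hTw : T *ᵥ w = 0) {u : Fin n → ℝ}
    (hu : ∀ i, u i * (T *ᵥ u) i ≤ 0) : ∃ c : ℝ, u = c • w := by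
  rcases isEmpty_or_nonempty (Fin n) with _ | ⟨⟨i₀⟩⟩
  · exact ⟨0, Subsingleton.elim _ _⟩
  refine ⟨u i₀ / w i₀, funext fun i => ?_⟩
  rw [hirr.eq_of_forall_ne_zero
    (fun i j hij => div_eq_div_of_mul_mulVec_nonpos hT hv hw hvT hTw hu hij) i₀ i]
  simp [div_mul_cancel₀ _ (hw i).ne']

namespace CondT2

variable {T : Matrix (Fin n) (Fin n) ℝ} {v w : Fin n → ℝ}

lemma offDiag_nonpos (hT : CondT2 T v w) (i j : Fin n) (hij : i ≠ j) : T i j ≤ 0 := by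
  obtain ⟨-, -, -, -, -, hM⟩ := hT
  have hd : (fun _ => (1 : ℝ)) ≠ 0 := fun h => one_ne_zero (congrFun h i)
  simpa [one_apply_ne hij] using (hM _ (fun _ => zero_le_one) hd).apply_nonpos hij

lemma vecMul_eq_zero (hT : CondT2 T v w) : v ᵥ* T = 0 := by
  obtain ⟨-, -, -, hker, -⟩ := hT
  simpa [mulVec_transpose] using
    (hker ▸ Submodule.mem_span_singleton_self v : v ∈ LinearMap.ker (mulVecLin Tᵀ))

lemma mulVec_eq_zero (hT : CondT2 T v w) : T *ᵥ w = 0 := by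
  obtain ⟨-, -, -, -, hker, -⟩ := hT
  simpa using (hker ▸ Submodule.mem_span_singleton_self w : w ∈ LinearMap.ker (mulVecLin T))

theorem eq_of_mulVec_posPart_sub_negPart_eq (hT : CondT2 T v w) {b : Fin n → ℝ}
    (hvb : v ⬝ᵥ b < 0) {x y : Fin n → ℝ} (hx : T *ᵥ x⁺ - x⁻ = b) (hy : T *ᵥ y⁺ - y⁻ = b) :
    x = y := by
  have ⟨hirr, hv, hw, _⟩ := hT
  have hTu : T *ᵥ (x⁺ - y⁺) = x⁻ - y⁻ := by
    rw [mulVec_sub]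
    linear_combination hx - hy
  obtain ⟨c, hc⟩ := hirr.exists_eq_smul_of_mul_mulVec_nonpos hT.offDiag_nonpos hv hw
    hT.vecMul_eq_zero hT.mulVec_eq_zero (u := x⁺ - y⁺) fun i => by
      rw [hTu]; exact posPart_sub_posPart_mul_negPart_sub_negPart_nonpos (x i) (y i)
  have hneg : x⁻ = y⁻ := by
    rw [← sub_eq_zero, ← hTu, hc, mulVec_smul, hT.mulVec_eq_zero, smul_zero]
  obtain ⟨k, hk⟩ := exists_neg_of_dotProduct_neg hT.vecMul_eq_zero hx hvb
  have hyk : y k < 0 := negPart_pos_iff.mp (hneg ▸ negPart_pos_iff.mpr hk : 0 < y⁻ k)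
  have hc0 : c = 0 := by
    simpa [posPart_of_nonpos hk.le, posPart_of_nonpos hyk.le, (hw k).ne'] using
      (congrFun hc k).symm
  have hpos : x⁺ = y⁺ := sub_eq_zero.mp (by simp [hc, hc0])
  rw [← posPart_sub_negPart x, ← posPart_sub_negPart y, hpos, hneg]

end CondT2

end

/-- If `T` is irreducible satisfying condition T2 and `vᵀb < 0`, then the
piecewise linear system `[I − P(x) + T·P(x)]·x = b` has a unique solution. -/
theorem stmt13 {n : ℕ} (T : Matrix (Fin n) (Fin n) ℝ) (v w : Fin n → ℝ)
    (hT : CondT2 T v w) (b : Fin n → ℝ) (hvb : v ⬝ᵥ b < 0) :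
    ∃! x : Fin n → ℝ, (1 - Pmat x + T * Pmat x) *ᵥ x = b := by
  have ⟨_, hv, hw, _, hker, _⟩ := hT
  simp only [one_sub_Pmat_add_mul_Pmat_mulVec_self]
  obtain ⟨x, hx⟩ := exists_mulVec_posPart_sub_negPart_eq hT.offDiag_nonpos hv hw
    hT.vecMul_eq_zero hker hvb
  exact ⟨x, hx, fun y hy => hT.eq_of_mulVec_posPart_sub_negPart_eq hvb hy hx⟩
end
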